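/- For every τ in the upper half-plane ℍ, with ζ₈ = exp(2πi/8): θ[1/4;1/4](0,τ)⁴ - ζ₈³·θ[1/4;3/4](0,τ)⁴ + ζ₈⁶·θ[1/4;5/4](0,τ)⁴ - ζ₈·θ[1/4;7/4](0,τ)⁴ = 4·θ[1/4;1](0,4τ)·θ[0;0](0,4τ)·( θ[0;0](0,4τ)² + 3·θ[1;0](0,4τ)² ). -/
import Mathlib


open Complex

/-- The theta function with characteristics `θ[ε; ε'](ζ, τ)`. -/
noncomputable def thetaChar (e e' : ℝ) (z τ : ℂ) : ℂ :=
  ∑' n : ℤ, Complex.exp (2 * Real.pi * I *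
    ((1/2) * ((n : ℂ) + (e : ℂ)/2)^2 * τ + ((n : ℂ) + (e : ℂ)/2) * (z + (e' : ℂ)/2)))

/-- The derivative theta constant `θ'[ε; ε'](0, τ) = ∂θ[ε;ε'](ζ,τ)/∂ζ |_{ζ=0}`. -/
noncomputable def thetaCharDeriv (e e' : ℝ) (τ : ℂ) : ℂ :=
  deriv (fun z => thetaChar e e' z τ) 0

namespace ThetaAux

noncomputable def f (a : ℝ) (b τ : ℂ) (n : ℤ) : ℂ :=
  Complex.exp ((Real.pi : ℂ) * I * τ * ((n : ℂ) + a) ^ 2 + b * ((n : ℂ) + a))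

lemma f_eq (a : ℝ) (b τ : ℂ) (n : ℤ) :
    f a b τ n = Complex.exp ((Real.pi : ℂ) * I * τ * a ^ 2 + b * a) *
      jacobiTheta₂_term n (τ * a + b / (2 * (Real.pi : ℂ) * I)) τ := by
  rw [f, jacobiTheta₂_term, ← Complex.exp_add]
  congr 1
  have h : (2 * (Real.pi : ℂ) * I) ≠ 0 := by
    simp [Real.pi_ne_zero, I_ne_zero]
  field_simp
  ring

lemma summable_norm_f (a : ℝ) (b : ℂ) {τ : ℂ} (hτ : 0 < τ.im) :
    Summable fun n : ℤ => ‖f a b τ n‖ := by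
  have h : Summable fun n : ℤ =>
      ‖jacobiTheta₂_term n (τ * a + b / (2 * (Real.pi : ℂ) * I)) τ‖ := by
    refine (summable_pow_mul_jacobiTheta₂_term_bound
      |(τ * a + b / (2 * (Real.pi : ℂ) * I)).im| hτ 0).of_nonneg_of_le
      (fun n => norm_nonneg _) (fun n => ?_)
    simpa only [pow_zero, one_mul] using norm_jacobiTheta₂_term_le hτ le_rfl le_rfl n
  refine (h.mul_left ‖Complex.exp ((Real.pi : ℂ) * I * τ * a ^ 2 + b * a)‖).congr fun n => ?_
  rw [f_eq, norm_mul]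

/-- product of four `f`-terms with `a = 1/8`. -/
noncomputable def P (b τ : ℂ) (p : ℤ × ℤ × ℤ × ℤ) : ℂ :=
  f (1/8) b τ p.1 * (f (1/8) b τ p.2.1 * (f (1/8) b τ p.2.2.1 * f (1/8) b τ p.2.2.2))

def N (p : ℤ × ℤ × ℤ × ℤ) : ℤ := p.1 + p.2.1 + p.2.2.1 + p.2.2.2

noncomputable def Y (τ : ℂ) (p : ℤ × ℤ × ℤ × ℤ) : ℂ :=
  (Real.pi : ℂ) * I * τ * (((p.1 : ℂ) + 1/8) ^ 2 + ((p.2.1 : ℂ) + 1/8) ^ 2 +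
    ((p.2.2.1 : ℂ) + 1/8) ^ 2 + ((p.2.2.2 : ℂ) + 1/8) ^ 2) +
  (Real.pi : ℂ) * I * ((N p : ℂ) + 1/2) / 4

noncomputable def u (p : ℤ × ℤ × ℤ × ℤ) : ℂ :=
  Complex.exp ((Real.pi : ℂ) * I * (N p : ℂ) / 2)

noncomputable def H (τ : ℂ) (p : ℤ × ℤ × ℤ × ℤ) : ℂ :=
  Complex.exp (Y τ p) * (1 + u p + u p ^ 2 + u p ^ 3)

noncomputable def K (τ : ℂ) (p : ℤ × ℤ × ℤ × ℤ) : ℂ :=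
  P ((Real.pi : ℂ) * I / 4) τ p
    - Complex.exp (2 * (Real.pi:ℂ) * I / 8) ^ 3 * P (3 * (Real.pi : ℂ) * I / 4) τ p
    + Complex.exp (2 * (Real.pi:ℂ) * I / 8) ^ 6 * P (5 * (Real.pi : ℂ) * I / 4) τ p
    - Complex.exp (2 * (Real.pi:ℂ) * I / 8) * P (7 * (Real.pi : ℂ) * I / 4) τ p

lemma P_exp (b τ : ℂ) (p : ℤ × ℤ × ℤ × ℤ) :
    P b τ p = Complex.exp ((Real.pi : ℂ) * I * τ * (((p.1 : ℂ) + 1/8) ^ 2 +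
      ((p.2.1 : ℂ) + 1/8) ^ 2 + ((p.2.2.1 : ℂ) + 1/8) ^ 2 + ((p.2.2.2 : ℂ) + 1/8) ^ 2)
      + b * ((N p : ℂ) + 1/2)) := by
  simp only [P, f, ← Complex.exp_add, N]
  congr 1
  push_cast
  ring

lemma key_filter (A M : ℂ) :
    Complex.exp (A + (Real.pi : ℂ) * I / 4 * (M + 1/2))
      - Complex.exp (2 * (Real.pi:ℂ) * I / 8) ^ 3 *
          Complex.exp (A + 3 * (Real.pi : ℂ) * I / 4 * (M + 1/2))
      + Complex.exp (2 * (Real.pi:ℂ) * I / 8) ^ 6 *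
          Complex.exp (A + 5 * (Real.pi : ℂ) * I / 4 * (M + 1/2))
      - Complex.exp (2 * (Real.pi:ℂ) * I / 8) *
          Complex.exp (A + 7 * (Real.pi : ℂ) * I / 4 * (M + 1/2)) =
    Complex.exp (A + (Real.pi : ℂ) * I * (M + 1/2) / 4) *
      (1 + Complex.exp ((Real.pi : ℂ) * I * M / 2) + Complex.exp ((Real.pi : ℂ) * I * M / 2) ^ 2 +
        Complex.exp ((Real.pi : ℂ) * I * M / 2) ^ 3) := by
  have h0 : Complex.exp (A + (Real.pi : ℂ) * I / 4 * (M + 1/2))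
      = Complex.exp (A + (Real.pi : ℂ) * I * (M + 1/2) / 4) := by
    congr 1; ring
  have h1 : Complex.exp (2 * (Real.pi:ℂ) * I / 8) ^ 3 *
      Complex.exp (A + 3 * (Real.pi : ℂ) * I / 4 * (M + 1/2))
      = Complex.exp ((Real.pi : ℂ) * I) *
        (Complex.exp (A + (Real.pi : ℂ) * I * (M + 1/2) / 4) *
          Complex.exp ((Real.pi : ℂ) * I * M / 2)) := by
    simp only [← Complex.exp_nat_mul, ← Complex.exp_add]
    congr 1; push_cast; ring
  have h2 : Complex.exp (2 * (Real.pi:ℂ) * I / 8) ^ 6 *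
      Complex.exp (A + 5 * (Real.pi : ℂ) * I / 4 * (M + 1/2))
      = Complex.exp (2 * (Real.pi : ℂ) * I) *
        (Complex.exp (A + (Real.pi : ℂ) * I * (M + 1/2) / 4) *
          Complex.exp ((Real.pi : ℂ) * I * M / 2) ^ 2) := by
    simp only [← Complex.exp_nat_mul, ← Complex.exp_add]
    congr 1; push_cast; ring
  have h3 : Complex.exp (2 * (Real.pi:ℂ) * I / 8) *
      Complex.exp (A + 7 * (Real.pi : ℂ) * I / 4 * (M + 1/2))
      = Complex.exp ((Real.pi : ℂ) * I) *
        (Complex.exp (A + (Real.pi : ℂ) * I * (M + 1/2) / 4) *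
          Complex.exp ((Real.pi : ℂ) * I * M / 2) ^ 3) := by
    simp only [← Complex.exp_nat_mul, ← Complex.exp_add]
    congr 1; push_cast; ring
  rw [h0, h1, h2, h3, Complex.exp_pi_mul_I, Complex.exp_two_pi_mul_I]
  ring

lemma K_eq_H (τ : ℂ) (p : ℤ × ℤ × ℤ × ℤ) : K τ p = H τ p := by
  rw [K, H, P_exp, P_exp, P_exp, P_exp, u, Y]
  exact key_filter _ _

lemma H_eq_zero {τ : ℂ} {p : ℤ × ℤ × ℤ × ℤ} (h : ¬ (4 ∣ N p)) : H τ p = 0 := by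
  have hπI : ((Real.pi : ℂ) * I) ≠ 0 := by simp [Real.pi_ne_zero, I_ne_zero]
  suffices hu : 1 + u p + u p ^ 2 + u p ^ 3 = 0 by rw [H, hu, mul_zero]
  have h4 : u p ^ 4 = 1 := by
    rw [u, ← Complex.exp_nat_mul,
      show ((4 : ℕ) : ℂ) * ((Real.pi : ℂ) * I * (N p : ℂ) / 2) =
        (N p : ℂ) * (2 * (Real.pi : ℂ) * I) by push_cast; ring]
    exact Complex.exp_int_mul_two_pi_mul_I _
  have hne : u p ≠ 1 := by
    intro h1
    rw [u, Complex.exp_eq_one_iff] at h1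
    obtain ⟨k, hk⟩ := h1
    refine h ⟨k, ?_⟩
    have h2 : ((Real.pi : ℂ) * I) * ((N p : ℂ)) = ((Real.pi : ℂ) * I) * (4 * (k : ℂ)) := by
      linear_combination (2 : ℂ) * hk
    have h3 : ((N p : ℂ)) = ((4 * k : ℤ) : ℂ) := by
      push_cast
      exact mul_left_cancel₀ hπI h2
    exact_mod_cast h3
  have hz : (u p - 1) * (1 + u p + u p ^ 2 + u p ^ 3) = 0 := by
    have h5 : (u p - 1) * (1 + u p + u p ^ 2 + u p ^ 3) = u p ^ 4 - 1 := by ring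
    rw [h5, h4, sub_self]
  rcases mul_eq_zero.mp hz with h' | h'
  · exact absurd (sub_eq_zero.mp h') hne
  · exact h'

def e₁ : (ℤ × ℤ × ℤ × ℤ) ≃ (ℤ × ℤ × ℤ × ℤ) where
  toFun q := (q.1 - q.2.1 - q.2.2.1 - q.2.2.2, q.2.1, q.2.2.1, q.2.2.2)
  invFun p := (p.1 + p.2.1 + p.2.2.1 + p.2.2.2, p.2.1, p.2.2.1, p.2.2.2)
  left_inv := by rintro ⟨a, b, c, d⟩; simp [Prod.ext_iff]; omega
  right_inv := by rintro ⟨a, b, c, d⟩; simp [Prod.ext_iff]; omega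

lemma N_e₁ (q : ℤ × ℤ × ℤ × ℤ) : N (e₁ q) = q.1 := by
  obtain ⟨a, b, c, d⟩ := q
  simp [N, e₁]
  omega

def i4 : (ℤ × ℤ × ℤ × ℤ) → (ℤ × ℤ × ℤ × ℤ) := fun q => (4 * q.1, q.2)

lemma i4_inj : Function.Injective i4 := by
  rintro ⟨a, b⟩ ⟨c, d⟩ h
  simp [i4, Prod.ext_iff] at h ⊢
  exact ⟨by omega, h.2⟩

def off : Bool × Bool → ℤ × ℤ × ℤ
  | (false, false) => (0, 0, 0)
  | (true, false) => (1, 0, 0)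
  | (true, true) => (0, 1, 0)
  | (false, true) => (0, 0, 1)

def Φf (x : (Bool × Bool) × (ℤ × ℤ × ℤ × ℤ)) : ℤ × ℤ × ℤ × ℤ :=
  (x.2.1, x.2.1 + x.2.2.1 - x.2.2.2.1 - x.2.2.2.2 - (off x.1).1,
    x.2.1 - x.2.2.1 + x.2.2.2.1 - x.2.2.2.2 - (off x.1).2.1,
    x.2.1 - x.2.2.1 - x.2.2.2.1 + x.2.2.2.2 - (off x.1).2.2)

lemma Φf_bij : Function.Bijective Φf := by
  constructor
  · rintro ⟨⟨s, t⟩, ⟨k, a, b, c⟩⟩ ⟨⟨s', t'⟩, ⟨k', a', b', c'⟩⟩ h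
    cases s <;> cases t <;> cases s' <;> cases t' <;>
      simp [Φf, off, Prod.ext_iff] at h ⊢ <;> omega
  · rintro ⟨m, n2, n3, n4⟩
    rcases Int.even_or_odd (n2 + n3) with ⟨v, hv⟩ | ⟨v, hv⟩ <;>
      rcases Int.even_or_odd (n3 + n4) with ⟨w, hw⟩ | ⟨w, hw⟩
    · exact ⟨⟨(false, false), (m, m - w, m - v - w + n3, m - v)⟩,
        by simp [Φf, off, Prod.ext_iff]; omega⟩
    · exact ⟨⟨(false, true), (m, m - w - 1, m - v - w - 1 + n3, m - v)⟩,
        by simp [Φf, off, Prod.ext_iff]; omega⟩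
    · exact ⟨⟨(true, false), (m, m - w, m - v - w - 1 + n3, m - v - 1)⟩,
        by simp [Φf, off, Prod.ext_iff]; omega⟩
    · exact ⟨⟨(true, true), (m, m - w - 1, m - v - w - 1 + n3, m - v - 1)⟩,
        by simp [Φf, off, Prod.ext_iff]; omega⟩

noncomputable def Φe : ((Bool × Bool) × (ℤ × ℤ × ℤ × ℤ)) ≃ (ℤ × ℤ × ℤ × ℤ) :=
  Equiv.ofBijective Φf Φf_bij

lemma Φe_apply (x : (Bool × Bool) × (ℤ × ℤ × ℤ × ℤ)) : Φe x = Φf x := rfl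

lemma u_of_four (m n2 n3 n4 : ℤ) (h : N (4*m - n2 - n3 - n4, n2, n3, n4) = 4 * m) :
    u (4*m - n2 - n3 - n4, n2, n3, n4) = 1 := by
  rw [u, h, show ((Real.pi:ℂ) * I * ((4*m : ℤ):ℂ) / 2) = (m:ℂ) * (2*(Real.pi:ℂ)*I) by
    push_cast; ring]
  exact Complex.exp_int_mul_two_pi_mul_I m

lemma Hb00 (τ : ℂ) (k a b c : ℤ) :
    H τ (e₁ (i4 (Φf ((false, false), (k, a, b, c))))) =
    4 * (f (1/8) ((Real.pi:ℂ)*I) (4*τ) k *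
      (f 0 0 (4*τ) a * (f 0 0 (4*τ) b * f 0 0 (4*τ) c))) := by
  have hp : e₁ (i4 (Φf ((false, false), (k, a, b, c)))) =
      (4*k - (k+a-b-c) - (k-a+b-c) - (k-a-b+c), k+a-b-c, k-a+b-c, k-a-b+c) := by
    simp [e₁, i4, Φf, off, Prod.ext_iff]
  have hN : N (4*k - (k+a-b-c) - (k-a+b-c) - (k-a-b+c), k+a-b-c, k-a+b-c, k-a-b+c)
      = 4 * k := by simp [N]; ring
  rw [hp, H, u_of_four _ _ _ _ hN, show (1+(1:ℂ)+1^2+1^3) = 4 by norm_num, Y, hN]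
  simp only [f, ← Complex.exp_add]
  rw [mul_comm]
  congr 2
  push_cast
  ring

lemma Hb10 (τ : ℂ) (k a b c : ℤ) :
    H τ (e₁ (i4 (Φf ((true, false), (k, a, b, c))))) =
    4 * (f (1/8) ((Real.pi:ℂ)*I) (4*τ) k *
      (f 0 0 (4*τ) a * (f (1/2) 0 (4*τ) b * f (1/2) 0 (4*τ) c))) := by
  have hp : e₁ (i4 (Φf ((true, false), (k, a, b, c)))) =
      (4*k - (k+a-b-c-1) - (k-a+b-c) - (k-a-b+c), k+a-b-c-1, k-a+b-c, k-a-b+c) := by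
    simp [e₁, i4, Φf, off, Prod.ext_iff]
  have hN : N (4*k - (k+a-b-c-1) - (k-a+b-c) - (k-a-b+c), k+a-b-c-1, k-a+b-c, k-a-b+c)
      = 4 * k := by simp [N]; ring
  rw [hp, H, u_of_four _ _ _ _ hN, show (1+(1:ℂ)+1^2+1^3) = 4 by norm_num, Y, hN]
  simp only [f, ← Complex.exp_add]
  rw [mul_comm]
  congr 2
  push_cast
  ring

lemma Hb11 (τ : ℂ) (k a b c : ℤ) :
    H τ (e₁ (i4 (Φf ((true, true), (k, a, b, c))))) =
    4 * (f (1/8) ((Real.pi:ℂ)*I) (4*τ) k *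
      (f (1/2) 0 (4*τ) a * (f 0 0 (4*τ) b * f (1/2) 0 (4*τ) c))) := by
  have hp : e₁ (i4 (Φf ((true, true), (k, a, b, c)))) =
      (4*k - (k+a-b-c) - (k-a+b-c-1) - (k-a-b+c), k+a-b-c, k-a+b-c-1, k-a-b+c) := by
    simp [e₁, i4, Φf, off, Prod.ext_iff]
  have hN : N (4*k - (k+a-b-c) - (k-a+b-c-1) - (k-a-b+c), k+a-b-c, k-a+b-c-1, k-a-b+c)
      = 4 * k := by simp [N]; ring
  rw [hp, H, u_of_four _ _ _ _ hN, show (1+(1:ℂ)+1^2+1^3) = 4 by norm_num, Y, hN]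
  simp only [f, ← Complex.exp_add]
  rw [mul_comm]
  congr 2
  push_cast
  ring

lemma Hb01 (τ : ℂ) (k a b c : ℤ) :
    H τ (e₁ (i4 (Φf ((false, true), (k, a, b, c))))) =
    4 * (f (1/8) ((Real.pi:ℂ)*I) (4*τ) k *
      (f (1/2) 0 (4*τ) a * (f (1/2) 0 (4*τ) b * f 0 0 (4*τ) c))) := by
  have hp : e₁ (i4 (Φf ((false, true), (k, a, b, c)))) =
      (4*k - (k+a-b-c) - (k-a+b-c) - (k-a-b+c-1), k+a-b-c, k-a+b-c, k-a-b+c-1) := by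
    simp [e₁, i4, Φf, off, Prod.ext_iff]
  have hN : N (4*k - (k+a-b-c) - (k-a+b-c) - (k-a-b+c-1), k+a-b-c, k-a+b-c, k-a-b+c-1)
      = 4 * k := by simp [N]; ring
  rw [hp, H, u_of_four _ _ _ _ hN, show (1+(1:ℂ)+1^2+1^3) = 4 by norm_num, Y, hN]
  simp only [f, ← Complex.exp_add]
  rw [mul_comm]
  congr 2
  push_cast
  ring

end ThetaAux

namespace ThetaAux

lemma theta14 (τ : ℂ) :
    thetaChar (1/4) (1/4) 0 τ = ∑' n : ℤ, f (1/8) ((Real.pi : ℂ) * I / 4) τ n := by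
  unfold thetaChar f
  refine tsum_congr fun n => ?_
  congr 1
  push_cast
  ring

lemma theta34 (τ : ℂ) :
    thetaChar (1/4) (3/4) 0 τ = ∑' n : ℤ, f (1/8) (3 * (Real.pi : ℂ) * I / 4) τ n := by
  unfold thetaChar f
  refine tsum_congr fun n => ?_
  congr 1
  push_cast
  ring

lemma theta54 (τ : ℂ) :
    thetaChar (1/4) (5/4) 0 τ = ∑' n : ℤ, f (1/8) (5 * (Real.pi : ℂ) * I / 4) τ n := by
  unfold thetaChar f
  refine tsum_congr fun n => ?_
  congr 1
  push_cast
  ring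

lemma theta74 (τ : ℂ) :
    thetaChar (1/4) (7/4) 0 τ = ∑' n : ℤ, f (1/8) (7 * (Real.pi : ℂ) * I / 4) τ n := by
  unfold thetaChar f
  refine tsum_congr fun n => ?_
  congr 1
  push_cast
  ring

lemma thetaA (τ : ℂ) :
    thetaChar (1/4) 1 0 (4*τ) = ∑' n : ℤ, f (1/8) ((Real.pi : ℂ) * I) (4*τ) n := by
  unfold thetaChar f
  refine tsum_congr fun n => ?_
  congr 1
  push_cast
  ring

lemma thetaB (τ : ℂ) :
    thetaChar 0 0 0 (4*τ) = ∑' n : ℤ, f 0 0 (4*τ) n := by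
  unfold thetaChar f
  refine tsum_congr fun n => ?_
  congr 1
  push_cast
  ring

lemma thetaC (τ : ℂ) :
    thetaChar 1 0 0 (4*τ) = ∑' n : ℤ, f (1/2) 0 (4*τ) n := by
  unfold thetaChar f
  refine tsum_congr fun n => ?_
  congr 1
  push_cast
  ring

lemma tsum_four {f1 f2 f3 f4 : ℤ → ℂ} (h1 : Summable fun n => ‖f1 n‖)
    (h2 : Summable fun n => ‖f2 n‖) (h3 : Summable fun n => ‖f3 n‖)
    (h4 : Summable fun n => ‖f4 n‖) :
    (∑' n, f1 n) * ((∑' n, f2 n) * ((∑' n, f3 n) * (∑' n, f4 n))) =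
      ∑' p : ℤ × ℤ × ℤ × ℤ, f1 p.1 * (f2 p.2.1 * (f3 p.2.2.1 * f4 p.2.2.2)) := by
  rw [tsum_mul_tsum_of_summable_norm h3 h4,
    tsum_mul_tsum_of_summable_norm h2 (h3.mul_norm h4),
    tsum_mul_tsum_of_summable_norm h1 (h2.mul_norm (h3.mul_norm h4))]

lemma summable_P (b : ℂ) {τ : ℂ} (hb : Summable fun n => ‖f (1/8) b τ n‖) :
    Summable (P b τ) :=
  ((hb.mul_norm (hb.mul_norm (hb.mul_norm hb))).of_norm).congr (fun _ => rfl)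

end ThetaAux

namespace ThetaAux

set_option maxHeartbeats 2000000 in
lemma lhs_eq (τ : ℂ) (hτ : 0 < τ.im) :
    ∑' p : ℤ × ℤ × ℤ × ℤ, K τ p =
      (4 * ((∑' n : ℤ, f (1/8) ((Real.pi:ℂ)*I) (4*τ) n) *
        ((∑' n : ℤ, f (1/2) 0 (4*τ) n) * ((∑' n : ℤ, f 0 0 (4*τ) n) * (∑' n : ℤ, f (1/2) 0 (4*τ) n))))
      + 4 * ((∑' n : ℤ, f (1/8) ((Real.pi:ℂ)*I) (4*τ) n) *
        ((∑' n : ℤ, f 0 0 (4*τ) n) * ((∑' n : ℤ, f (1/2) 0 (4*τ) n) * (∑' n : ℤ, f (1/2) 0 (4*τ) n)))))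
      + (4 * ((∑' n : ℤ, f (1/8) ((Real.pi:ℂ)*I) (4*τ) n) *
        ((∑' n : ℤ, f (1/2) 0 (4*τ) n) * ((∑' n : ℤ, f (1/2) 0 (4*τ) n) * (∑' n : ℤ, f 0 0 (4*τ) n))))
      + 4 * ((∑' n : ℤ, f (1/8) ((Real.pi:ℂ)*I) (4*τ) n) *
        ((∑' n : ℤ, f 0 0 (4*τ) n) * ((∑' n : ℤ, f 0 0 (4*τ) n) * (∑' n : ℤ, f 0 0 (4*τ) n))))) := by
  have h4τ : 0 < (4*τ : ℂ).im := by
    have h : ((4:ℂ)*τ).im = 4 * τ.im := by simp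
    rw [h]; linarith
  have nA : Summable fun n : ℤ => ‖f (1/8) ((Real.pi:ℂ)*I) (4*τ) n‖ := summable_norm_f _ _ h4τ
  have nB : Summable fun n : ℤ => ‖f 0 0 (4*τ) n‖ := summable_norm_f _ _ h4τ
  have nC : Summable fun n : ℤ => ‖f (1/2) 0 (4*τ) n‖ := summable_norm_f _ _ h4τ
  have n1 : Summable fun n : ℤ => ‖f (1/8) ((Real.pi:ℂ)*I/4) τ n‖ := summable_norm_f _ _ hτ
  have n3 : Summable fun n : ℤ => ‖f (1/8) (3*(Real.pi:ℂ)*I/4) τ n‖ := summable_norm_f _ _ hτ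
  have n5 : Summable fun n : ℤ => ‖f (1/8) (5*(Real.pi:ℂ)*I/4) τ n‖ := summable_norm_f _ _ hτ
  have n7 : Summable fun n : ℤ => ‖f (1/8) (7*(Real.pi:ℂ)*I/4) τ n‖ := summable_norm_f _ _ hτ
  have sP1 : Summable (P ((Real.pi:ℂ)*I/4) τ) := summable_P _ n1
  have sP3 : Summable (P (3*(Real.pi:ℂ)*I/4) τ) := summable_P _ n3
  have sP5 : Summable (P (5*(Real.pi:ℂ)*I/4) τ) := summable_P _ n5
  have sP7 : Summable (P (7*(Real.pi:ℂ)*I/4) τ) := summable_P _ n7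
  have sK : Summable (K τ) :=
    ((((sP1.sub (sP3.mul_left (Complex.exp (2*(Real.pi:ℂ)*I/8)^3))).add
      (sP5.mul_left (Complex.exp (2*(Real.pi:ℂ)*I/8)^6))).sub
      (sP7.mul_left (Complex.exp (2*(Real.pi:ℂ)*I/8)))).congr (fun _ => rfl))
  have sH : Summable (H τ) := sK.congr (K_eq_H τ)
  have s1 : Summable fun q => H τ (e₁ q) := e₁.summable_iff.mpr sH
  have s2 : Summable fun q => H τ (e₁ (i4 q)) := s1.comp_injective i4_inj
  have s3 : Summable fun y => H τ (e₁ (i4 (Φe y))) := Φe.summable_iff.mpr s2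
  calc ∑' p : ℤ × ℤ × ℤ × ℤ, K τ p
      = ∑' p : ℤ × ℤ × ℤ × ℤ, H τ p := tsum_congr (K_eq_H τ)
    _ = ∑' q : ℤ × ℤ × ℤ × ℤ, H τ (e₁ q) := (e₁.tsum_eq (H τ)).symm
    _ = ∑' q : ℤ × ℤ × ℤ × ℤ, H τ (e₁ (i4 q)) := by
        refine (Function.Injective.tsum_eq i4_inj ?_).symm
        intro q hq
        have hdvd : 4 ∣ N (e₁ q) := by
          by_contra h
          exact hq (H_eq_zero h)
        rw [N_e₁] at hdvd
        obtain ⟨m, hm⟩ := hdvd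
        exact ⟨(m, q.2), by simp [i4, Prod.ext_iff]; omega⟩
    _ = ∑' y : (Bool × Bool) × (ℤ × ℤ × ℤ × ℤ), H τ (e₁ (i4 (Φe y))) :=
        (Φe.tsum_eq (fun q => H τ (e₁ (i4 q)))).symm
    _ = ∑' st : Bool × Bool, ∑' x : ℤ × ℤ × ℤ × ℤ, H τ (e₁ (i4 (Φe (st, x)))) :=
        Summable.tsum_prod s3
    _ = ((∑' x : ℤ × ℤ × ℤ × ℤ, H τ (e₁ (i4 (Φf ((true, true), x)))))
        + (∑' x : ℤ × ℤ × ℤ × ℤ, H τ (e₁ (i4 (Φf ((true, false), x))))))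
        + ((∑' x : ℤ × ℤ × ℤ × ℤ, H τ (e₁ (i4 (Φf ((false, true), x)))))
        + (∑' x : ℤ × ℤ × ℤ × ℤ, H τ (e₁ (i4 (Φf ((false, false), x)))))) := by
        rw [tsum_fintype, Fintype.sum_prod_type, Fintype.sum_bool, Fintype.sum_bool,
          Fintype.sum_bool]
        rfl
    _ = _ := by
        rw [show (∑' x : ℤ × ℤ × ℤ × ℤ, H τ (e₁ (i4 (Φf ((true, true), x)))))
            = ∑' x : ℤ × ℤ × ℤ × ℤ, 4 * (f (1/8) ((Real.pi:ℂ)*I) (4*τ) x.1 *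
              (f (1/2) 0 (4*τ) x.2.1 * (f 0 0 (4*τ) x.2.2.1 * f (1/2) 0 (4*τ) x.2.2.2)))
            from tsum_congr fun x => Hb11 τ x.1 x.2.1 x.2.2.1 x.2.2.2]
        rw [show (∑' x : ℤ × ℤ × ℤ × ℤ, H τ (e₁ (i4 (Φf ((true, false), x)))))
            = ∑' x : ℤ × ℤ × ℤ × ℤ, 4 * (f (1/8) ((Real.pi:ℂ)*I) (4*τ) x.1 *
              (f 0 0 (4*τ) x.2.1 * (f (1/2) 0 (4*τ) x.2.2.1 * f (1/2) 0 (4*τ) x.2.2.2)))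
            from tsum_congr fun x => Hb10 τ x.1 x.2.1 x.2.2.1 x.2.2.2]
        rw [show (∑' x : ℤ × ℤ × ℤ × ℤ, H τ (e₁ (i4 (Φf ((false, true), x)))))
            = ∑' x : ℤ × ℤ × ℤ × ℤ, 4 * (f (1/8) ((Real.pi:ℂ)*I) (4*τ) x.1 *
              (f (1/2) 0 (4*τ) x.2.1 * (f (1/2) 0 (4*τ) x.2.2.1 * f 0 0 (4*τ) x.2.2.2)))
            from tsum_congr fun x => Hb01 τ x.1 x.2.1 x.2.2.1 x.2.2.2]
        rw [show (∑' x : ℤ × ℤ × ℤ × ℤ, H τ (e₁ (i4 (Φf ((false, false), x)))))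
            = ∑' x : ℤ × ℤ × ℤ × ℤ, 4 * (f (1/8) ((Real.pi:ℂ)*I) (4*τ) x.1 *
              (f 0 0 (4*τ) x.2.1 * (f 0 0 (4*τ) x.2.2.1 * f 0 0 (4*τ) x.2.2.2)))
            from tsum_congr fun x => Hb00 τ x.1 x.2.1 x.2.2.1 x.2.2.2]
        rw [tsum_mul_left, tsum_mul_left, tsum_mul_left, tsum_mul_left,
          ← tsum_four nA nC nB nC, ← tsum_four nA nB nC nC, ← tsum_four nA nC nC nB,
          ← tsum_four nA nB nB nB]

end ThetaAux


open ThetaAux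

set_option maxHeartbeats 2000000 in
theorem theta_fourth_power_combination (τ : ℂ) (hτ : 0 < τ.im) :
    thetaChar (1/4) (1/4) 0 τ ^ 4
      - Complex.exp (2 * Real.pi * I / 8) ^ 3 * thetaChar (1/4) (3/4) 0 τ ^ 4
      + Complex.exp (2 * Real.pi * I / 8) ^ 6 * thetaChar (1/4) (5/4) 0 τ ^ 4
      - Complex.exp (2 * Real.pi * I / 8) * thetaChar (1/4) (7/4) 0 τ ^ 4 =
    4 * thetaChar (1/4) 1 0 (4*τ) * thetaChar 0 0 0 (4*τ) *
      (thetaChar 0 0 0 (4*τ) ^ 2 + 3 * thetaChar 1 0 0 (4*τ) ^ 2) := by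
  have n1 : Summable fun n : ℤ => ‖f (1/8) ((Real.pi:ℂ)*I/4) τ n‖ := summable_norm_f _ _ hτ
  have n3 : Summable fun n : ℤ => ‖f (1/8) (3*(Real.pi:ℂ)*I/4) τ n‖ := summable_norm_f _ _ hτ
  have n5 : Summable fun n : ℤ => ‖f (1/8) (5*(Real.pi:ℂ)*I/4) τ n‖ := summable_norm_f _ _ hτ
  have n7 : Summable fun n : ℤ => ‖f (1/8) (7*(Real.pi:ℂ)*I/4) τ n‖ := summable_norm_f _ _ hτ
  have sP1 : Summable (P ((Real.pi:ℂ)*I/4) τ) := summable_P _ n1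
  have sP3 : Summable (P (3*(Real.pi:ℂ)*I/4) τ) := summable_P _ n3
  have sP5 : Summable (P (5*(Real.pi:ℂ)*I/4) τ) := summable_P _ n5
  have sP7 : Summable (P (7*(Real.pi:ℂ)*I/4) τ) := summable_P _ n7
  have hp4 : ∀ x : ℂ, x ^ 4 = x * (x * (x * x)) := fun x => by ring
  rw [theta14 τ, theta34 τ, theta54 τ, theta74 τ, thetaA τ, thetaB τ, thetaC τ,
    hp4, hp4, hp4, hp4]
  rw [show (∑' n : ℤ, f (1/8) ((Real.pi:ℂ)*I/4) τ n) *
      ((∑' n : ℤ, f (1/8) ((Real.pi:ℂ)*I/4) τ n) * ((∑' n : ℤ, f (1/8) ((Real.pi:ℂ)*I/4) τ n) *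
        (∑' n : ℤ, f (1/8) ((Real.pi:ℂ)*I/4) τ n))) = ∑' p : ℤ × ℤ × ℤ × ℤ,
        P ((Real.pi:ℂ)*I/4) τ p from tsum_four n1 n1 n1 n1]
  rw [show (∑' n : ℤ, f (1/8) (3*(Real.pi:ℂ)*I/4) τ n) *
      ((∑' n : ℤ, f (1/8) (3*(Real.pi:ℂ)*I/4) τ n) * ((∑' n : ℤ, f (1/8) (3*(Real.pi:ℂ)*I/4) τ n) *
        (∑' n : ℤ, f (1/8) (3*(Real.pi:ℂ)*I/4) τ n))) = ∑' p : ℤ × ℤ × ℤ × ℤ,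
        P (3*(Real.pi:ℂ)*I/4) τ p from tsum_four n3 n3 n3 n3]
  rw [show (∑' n : ℤ, f (1/8) (5*(Real.pi:ℂ)*I/4) τ n) *
      ((∑' n : ℤ, f (1/8) (5*(Real.pi:ℂ)*I/4) τ n) * ((∑' n : ℤ, f (1/8) (5*(Real.pi:ℂ)*I/4) τ n) *
        (∑' n : ℤ, f (1/8) (5*(Real.pi:ℂ)*I/4) τ n))) = ∑' p : ℤ × ℤ × ℤ × ℤ,
        P (5*(Real.pi:ℂ)*I/4) τ p from tsum_four n5 n5 n5 n5]
  rw [show (∑' n : ℤ, f (1/8) (7*(Real.pi:ℂ)*I/4) τ n) *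
      ((∑' n : ℤ, f (1/8) (7*(Real.pi:ℂ)*I/4) τ n) * ((∑' n : ℤ, f (1/8) (7*(Real.pi:ℂ)*I/4) τ n) *
        (∑' n : ℤ, f (1/8) (7*(Real.pi:ℂ)*I/4) τ n))) = ∑' p : ℤ × ℤ × ℤ × ℤ,
        P (7*(Real.pi:ℂ)*I/4) τ p from tsum_four n7 n7 n7 n7]
  have hKsum : ∑' p : ℤ × ℤ × ℤ × ℤ, K τ p =
      (∑' p : ℤ × ℤ × ℤ × ℤ, P ((Real.pi:ℂ)*I/4) τ p)
      - Complex.exp (2*(Real.pi:ℂ)*I/8)^3 * ∑' p : ℤ × ℤ × ℤ × ℤ, P (3*(Real.pi:ℂ)*I/4) τ p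
      + Complex.exp (2*(Real.pi:ℂ)*I/8)^6 * ∑' p : ℤ × ℤ × ℤ × ℤ, P (5*(Real.pi:ℂ)*I/4) τ p
      - Complex.exp (2*(Real.pi:ℂ)*I/8) * ∑' p : ℤ × ℤ × ℤ × ℤ, P (7*(Real.pi:ℂ)*I/4) τ p := by
    have e1 : ∑' p : ℤ × ℤ × ℤ × ℤ, K τ p =
        (∑' p : ℤ × ℤ × ℤ × ℤ, (P ((Real.pi:ℂ)*I/4) τ p
          - Complex.exp (2*(Real.pi:ℂ)*I/8)^3 * P (3*(Real.pi:ℂ)*I/4) τ p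
          + Complex.exp (2*(Real.pi:ℂ)*I/8)^6 * P (5*(Real.pi:ℂ)*I/4) τ p))
        - ∑' p : ℤ × ℤ × ℤ × ℤ, Complex.exp (2*(Real.pi:ℂ)*I/8) * P (7*(Real.pi:ℂ)*I/4) τ p :=
      Summable.tsum_sub ((sP1.sub (sP3.mul_left _)).add (sP5.mul_left _)) (sP7.mul_left _)
    have e2 : ∑' p : ℤ × ℤ × ℤ × ℤ, (P ((Real.pi:ℂ)*I/4) τ p
          - Complex.exp (2*(Real.pi:ℂ)*I/8)^3 * P (3*(Real.pi:ℂ)*I/4) τ p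
          + Complex.exp (2*(Real.pi:ℂ)*I/8)^6 * P (5*(Real.pi:ℂ)*I/4) τ p) =
        (∑' p : ℤ × ℤ × ℤ × ℤ, (P ((Real.pi:ℂ)*I/4) τ p
          - Complex.exp (2*(Real.pi:ℂ)*I/8)^3 * P (3*(Real.pi:ℂ)*I/4) τ p))
        + ∑' p : ℤ × ℤ × ℤ × ℤ, Complex.exp (2*(Real.pi:ℂ)*I/8)^6 * P (5*(Real.pi:ℂ)*I/4) τ p :=
      Summable.tsum_add (sP1.sub (sP3.mul_left _)) (sP5.mul_left _)
    have e3 : ∑' p : ℤ × ℤ × ℤ × ℤ, (P ((Real.pi:ℂ)*I/4) τ p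
          - Complex.exp (2*(Real.pi:ℂ)*I/8)^3 * P (3*(Real.pi:ℂ)*I/4) τ p) =
        (∑' p : ℤ × ℤ × ℤ × ℤ, P ((Real.pi:ℂ)*I/4) τ p)
        - ∑' p : ℤ × ℤ × ℤ × ℤ, Complex.exp (2*(Real.pi:ℂ)*I/8)^3 * P (3*(Real.pi:ℂ)*I/4) τ p :=
      Summable.tsum_sub sP1 (sP3.mul_left _)
    rw [e1, e2, e3, tsum_mul_left, tsum_mul_left, tsum_mul_left]
  rw [← hKsum, lhs_eq τ hτ]
  ring
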